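/- arXiv:1712.00150 — 2 statements merged into one kernel-verified Lean document; each statement's English description precedes it below -/
import Mathlib

section
/- The standard pattern T(8,2) = {(8x+2y, y) : x, y ∈ ℤ} is a (4,5) broadcast on the infinite grid; that is, for every vertex v ∈ ℤ×ℤ, the total signal received at v from towers of strength 4 located at the points of T(8,2) is at least 5. -/
/-! Since `T(d,e)` is closed under addition, the signal it sends is invariant under translation
by its own points, and every vertex is such a translate of some `(r, 0)` with `0 ≤ r < d`.
For `T(8,2)` it therefore suffices to check the eight vertices `(r, 0)`, `0 ≤ r < 8`: the six
towers `(0,0), (2,1), (4,±2), (6,-1), (8,0)` alone already send each of them signal at least `5`. -/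

open Filter Topology

/-- Graph (L¹) distance on the infinite grid ℤ×ℤ. -/
def gridDist (u v : ℤ × ℤ) : ℕ := (u.1 - v.1).natAbs + (u.2 - v.2).natAbs

open Classical in
/-- Total signal received at `v` from towers of strength `t` located at the points of `S`:
the finite sum `∑_{T ∈ S, dist(v,T) < t} (t − dist(v,T))`. -/
noncomputable def totalSignal (t : ℕ) (S : Set (ℤ × ℤ)) (v : ℤ × ℤ) : ℕ :=
  ∑ T ∈ (Finset.Icc (v.1 - (t : ℤ)) (v.1 + (t : ℤ)) ×ˢ
      Finset.Icc (v.2 - (t : ℤ)) (v.2 + (t : ℤ))).filter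
      (fun T => T ∈ S ∧ gridDist v T < t),
    (t - gridDist v T)

/-- `S` is a `(t,r)` broadcast if every vertex receives total signal at least `r`. -/
def IsBroadcast (t r : ℕ) (S : Set (ℤ × ℤ)) : Prop :=
  ∀ v : ℤ × ℤ, r ≤ totalSignal t S v

/-- The standard pattern `T(d,e) = {(dx+ey, y) : x, y ∈ ℤ}`. -/
def stdPattern (d e : ℤ) : Set (ℤ × ℤ) := {p | ∃ x y : ℤ, p = (d * x + e * y, y)}

open Classical in
/-- The number of points of `S` in the square `V_n = {(a,b) : |a| ≤ n, |b| ≤ n}`. -/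
noncomputable def gridCount (S : Set (ℤ × ℤ)) (n : ℕ) : ℕ :=
  ((Finset.Icc (-(n : ℤ)) (n : ℤ) ×ˢ Finset.Icc (-(n : ℤ)) (n : ℤ)).filter
    (fun v => v ∈ S)).card

theorem gridDist_add_right (u v w : ℤ × ℤ) : gridDist (u + w) (v + w) = gridDist u v := by
  simp only [gridDist, Prod.fst_add, Prod.snd_add, add_sub_add_right_eq_sub]

theorem mem_stdPattern_iff {d e : ℤ} {p : ℤ × ℤ} : p ∈ stdPattern d e ↔ d ∣ p.1 - e * p.2 := by
  constructor
  · rintro ⟨x, y, rfl⟩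
    exact ⟨x, by ring⟩
  · rintro ⟨x, hx⟩
    exact ⟨x, p.2, Prod.ext (by linarith) rfl⟩

theorem add_mem_stdPattern {d e : ℤ} {p q : ℤ × ℤ} (hp : p ∈ stdPattern d e)
    (hq : q ∈ stdPattern d e) : p + q ∈ stdPattern d e := by
  rw [mem_stdPattern_iff] at *
  simpa only [Prod.fst_add, Prod.snd_add, mul_add, add_sub_add_comm] using dvd_add hp hq

theorem exists_eq_add_mem_stdPattern {d : ℤ} (hd : 0 < d) (e : ℤ) (v : ℤ × ℤ) :
    ∃ r, 0 ≤ r ∧ r < d ∧ ∃ w ∈ stdPattern d e, v = (r, 0) + w := by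
  refine ⟨(v.1 - e * v.2) % d, Int.emod_nonneg _ hd.ne', Int.emod_lt_of_pos _ hd,
    (v.1 - (v.1 - e * v.2) % d, v.2), ?_, ?_⟩
  · rw [mem_stdPattern_iff]
    exact ⟨(v.1 - e * v.2) / d, by have := Int.mul_ediv_add_emod (v.1 - e * v.2) d; linarith⟩
  · ext <;> simp

theorem sum_le_totalSignal (t : ℕ) {S : Set (ℤ × ℤ)} (v : ℤ × ℤ) {F : Finset (ℤ × ℤ)}
    (hF : ↑F ⊆ S) : ∑ T ∈ F, (t - gridDist v T) ≤ totalSignal t S v := by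
  classical
  unfold totalSignal
  -- towers at distance `≥ t` contribute `t - dist = 0` by truncated subtraction
  rw [← Finset.sum_filter_of_ne (p := fun T => gridDist v T < t) (fun T _ h => by omega)]
  refine Finset.sum_le_sum_of_subset fun T hT => ?_
  obtain ⟨hTF, hT⟩ := Finset.mem_filter.mp hT
  have hbox := hT
  simp only [gridDist] at hbox
  simp only [Finset.mem_filter, Finset.mem_product, Finset.mem_Icc]
  exact ⟨by omega, hF hTF, hT⟩

theorem sum_le_totalSignal_add {t : ℕ} {S : Set (ℤ × ℤ)} (hS : ∀ p ∈ S, ∀ q ∈ S, p + q ∈ S)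
    {F : Finset (ℤ × ℤ)} (hF : ↑F ⊆ S) (v : ℤ × ℤ) {w : ℤ × ℤ} (hw : w ∈ S) :
    ∑ T ∈ F, (t - gridDist v T) ≤ totalSignal t S (v + w) := by
  calc ∑ T ∈ F, (t - gridDist v T)
      = ∑ T ∈ F.map (addRightEmbedding w), (t - gridDist (v + w) T) := by
        simp only [Finset.sum_map, addRightEmbedding_apply, gridDist_add_right]
    _ ≤ totalSignal t S (v + w) := sum_le_totalSignal t _ <| by
        rintro _ hT'
        obtain ⟨T, hT, rfl⟩ := Finset.mem_map.mp hT'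
        exact hS T (hF hT) w hw

def nearTowers82 : Finset (ℤ × ℤ) := {(0, 0), (2, 1), (4, 2), (4, -2), (6, -1), (8, 0)}

theorem nearTowers82_subset : ↑nearTowers82 ⊆ stdPattern 8 2 := by
  simp only [nearTowers82, Finset.coe_insert, Finset.coe_singleton, Set.insert_subset_iff,
    Set.singleton_subset_iff, mem_stdPattern_iff]
  decide

theorem five_le_sum_signal_nearTowers82 (r : ℤ) (h0 : 0 ≤ r) (h8 : r < 8) :
    5 ≤ ∑ T ∈ nearTowers82, (4 - gridDist (r, 0) T) := by
  interval_cases r <;> decide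

theorem stmt10 : IsBroadcast 4 5 (stdPattern 8 2) := by
  intro v
  obtain ⟨r, h0, h8, w, hw, rfl⟩ := exists_eq_add_mem_stdPattern (d := 8) (by norm_num) 2 v
  exact (five_le_sum_signal_nearTowers82 r h0 h8).trans <|
    sum_le_totalSignal_add (fun _ hp _ hq => add_mem_stdPattern hp hq) nearTowers82_subset _ hw
end

section
/- The standard pattern T(14,4) = {(14x+4y, y) : x, y ∈ ℤ} is a (5,5) broadcast on the infinite grid; consequently there is a (5,5) broadcast of density 1/14, which is strictly less than 1/13, the optimal density of a (3,1) broadcast, so the optimal (3,1) and (5,5) broadcast densities are not equal. -/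
open Filter Topology

/-
The pattern `T(d,e)` is the lattice `{p | p.1 ≡ e * p.2 [ZMOD d]}`, so translating by one of its
points preserves the signal it broadcasts; every vertex is such a translate of some `(a, 0)` with
`0 ≤ a < d`, and for `T(14,4)` the fourteen signals at these vertices are computed directly.
Each row of the square `V_n` meets `T(d,e)` in `(2n+1)/d` points up to an error below one, which
gives the density `1/d`.
-/

open Finset

theorem mem_stdPattern {d e : ℤ} {p : ℤ × ℤ} : p ∈ stdPattern d e ↔ p.1 ≡ e * p.2 [ZMOD d] := by
  rw [Int.modEq_iff_dvd]
  constructor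
  · rintro ⟨x, y, rfl⟩
    exact ⟨-x, by ring⟩
  · rintro ⟨k, hk⟩
    exact ⟨-k, p.2, Prod.ext (by linarith) rfl⟩

theorem add_mem_stdPattern_iff {d e : ℤ} {c : ℤ × ℤ} (hc : c ∈ stdPattern d e) (T : ℤ × ℤ) :
    T + c ∈ stdPattern d e ↔ T ∈ stdPattern d e := by
  rw [mem_stdPattern] at hc
  simp only [mem_stdPattern, Prod.fst_add, Prod.snd_add, mul_add]
  exact ⟨fun h => Int.ModEq.add_right_cancel hc h, fun h => h.add hc⟩

theorem totalSignal_add {S : Set (ℤ × ℤ)} {c : ℤ × ℤ} (hS : ∀ T, T + c ∈ S ↔ T ∈ S)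
    (t : ℕ) (v : ℤ × ℤ) : totalSignal t S (v + c) = totalSignal t S v := by
  classical
  unfold totalSignal
  refine sum_nbij' (· - c) (· + c) ?_ ?_ (fun T _ => sub_add_cancel T c)
    (fun T _ => add_sub_cancel_right T c) ?_
  · intro T hT
    have hmem : T - c ∈ S ↔ T ∈ S := by simpa using (hS (T - c)).symm
    rw [mem_filter] at hT ⊢
    simp only [mem_product, mem_Icc,
      Prod.fst_add, Prod.snd_add, Prod.fst_sub, Prod.snd_sub, gridDist, hmem] at hT ⊢
    obtain ⟨hbox, hTS, hdist⟩ := hT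
    exact ⟨by omega, hTS, by omega⟩
  · intro T hT
    rw [mem_filter] at hT ⊢
    simp only [mem_product, mem_Icc,
      Prod.fst_add, Prod.snd_add, gridDist, hS] at hT ⊢
    obtain ⟨hbox, hTS, hdist⟩ := hT
    exact ⟨by omega, hTS, by omega⟩
  · intro T _
    simp only [Prod.fst_add, Prod.snd_add, Prod.fst_sub, Prod.snd_sub, gridDist]
    congr 2 <;> omega

theorem isBroadcast_stdPattern_of_forall {t r : ℕ} {d : ℤ} (hd : 0 < d) (e : ℤ)
    (h : ∀ a, 0 ≤ a → a < d → r ≤ totalSignal t (stdPattern d e) (a, 0)) :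
    IsBroadcast t r (stdPattern d e) := by
  intro v
  set a := (v.1 - e * v.2) % d
  have hc : (v.1 - a, v.2) ∈ stdPattern d e := by
    rw [mem_stdPattern]
    simpa using (Int.mod_modEq (v.1 - e * v.2) d).sub_left v.1
  have hv : v = (a, 0) + (v.1 - a, v.2) := by ext <;> simp
  rw [hv, totalSignal_add (add_mem_stdPattern_iff hc)]
  exact h a (Int.emod_nonneg _ hd.ne') (Int.emod_lt_of_pos _ hd)

theorem totalSignal_stdPattern (t : ℕ) (d e : ℤ) (v : ℤ × ℤ) :
    totalSignal t (stdPattern d e) v =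
      ∑ T ∈ (Icc (v.1 - (t : ℤ)) (v.1 + (t : ℤ)) ×ˢ
          Icc (v.2 - (t : ℤ)) (v.2 + (t : ℤ))).filter
          (fun T => T.1 ≡ e * T.2 [ZMOD d] ∧ gridDist v T < t),
        (t - gridDist v T) := by
  classical
  unfold totalSignal
  congr 1
  exact filter_congr fun T _ => and_congr_left' mem_stdPattern

theorem isBroadcast_stdPattern_14_4 : IsBroadcast 5 5 (stdPattern 14 4) := by
  refine isBroadcast_stdPattern_of_forall (by norm_num) 4 fun a h0 h14 => ?_
  rw [totalSignal_stdPattern]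
  interval_cases a <;> decide

theorem Int.abs_card_Ioc_filter_modEq_sub_lt {a b : ℤ} (hab : a ≤ b) {r : ℤ} (hr : 0 < r)
    (v : ℤ) : |(#{x ∈ Ioc a b | x ≡ v [ZMOD r]} : ℚ) - (b - a) / r| < 1 := by
  have hcard := Int.Ioc_filter_modEq_card a b hr v
  have hr' : (0 : ℚ) < r := by exact_mod_cast hr
  have hdiff : ((b : ℚ) - v) / r - (a - v) / r = (b - a) / r := by ring
  have hnonneg : (0 : ℚ) ≤ (b - a) / r := div_nonneg (by exact_mod_cast sub_nonneg.2 hab) hr'.le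
  have h₁ := Int.floor_le (((b : ℚ) - v) / r)
  have h₂ := Int.lt_floor_add_one (((b : ℚ) - v) / r)
  have h₃ := Int.floor_le (((a : ℚ) - v) / r)
  have h₄ := Int.lt_floor_add_one (((a : ℚ) - v) / r)
  have hlow : ((⌊((b : ℚ) - v) / r⌋ - ⌊((a : ℚ) - v) / r⌋ : ℤ) : ℚ) ≤
      #{x ∈ Ioc a b | x ≡ v [ZMOD r]} := by
    exact_mod_cast hcard ▸ le_max_left _ _
  have hup : (#{x ∈ Ioc a b | x ≡ v [ZMOD r]} : ℚ) < (b - a) / r + 1 := by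
    rcases max_cases (⌊((b : ℚ) - v) / r⌋ - ⌊((a : ℚ) - v) / r⌋) 0 with ⟨hm, _⟩ | ⟨hm, _⟩ <;>
      · rw [← Int.cast_natCast, hcard, hm]
        push_cast
        linarith
  rw [abs_sub_lt_iff]
  push_cast at hlow
  constructor <;> linarith

open Classical in
theorem gridCount_eq_sum (S : Set (ℤ × ℤ)) (n : ℕ) :
    gridCount S n = ∑ b ∈ Icc (-(n : ℤ)) n, #{a ∈ Icc (-(n : ℤ)) n | (a, b) ∈ S} := by
  unfold gridCount
  rw [card_filter, sum_product_right]
  simp_rw [card_filter]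

open Classical in
theorem abs_card_filter_mem_stdPattern_sub_le {d : ℤ} (hd : 0 < d) (e : ℤ) (n : ℕ) (b : ℤ) :
    |(#{a ∈ Icc (-(n : ℤ)) n | (a, b) ∈ stdPattern d e} : ℝ) - (2 * n + 1) / d| ≤ 1 := by
  simp_rw [mem_stdPattern, ← Ioc_sub_one_left_eq_Icc]
  have hrow := Int.abs_card_Ioc_filter_modEq_sub_lt (by omega : -(n : ℤ) - 1 ≤ n) hd (e * b)
  rw [show ((n : ℤ) : ℚ) - ((-(n : ℤ) - 1 : ℤ) : ℚ) = 2 * n + 1 by push_cast; ring] at hrow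
  have hreal := (Rat.cast_lt (K := ℝ)).2 hrow
  push_cast at hreal
  exact hreal.le

theorem Int.card_Icc_neg_self (n : ℕ) : #(Icc (-(n : ℤ)) n) = 2 * n + 1 := by
  rw [Int.card_Icc]
  omega

theorem abs_gridCount_stdPattern_sub_le {d : ℤ} (hd : 0 < d) (e : ℤ) (n : ℕ) :
    |(gridCount (stdPattern d e) n : ℝ) - (2 * n + 1) * ((2 * n + 1) / d)| ≤ 2 * n + 1 := by
  classical
  have hcard : (#(Icc (-(n : ℤ)) n) : ℝ) = 2 * n + 1 := by
    exact_mod_cast Int.card_Icc_neg_self n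
  rw [gridCount_eq_sum]
  push_cast
  calc _ = |∑ b ∈ Icc (-(n : ℤ)) n,
          ((#{a ∈ Icc (-(n : ℤ)) n | (a, b) ∈ stdPattern d e} : ℝ) - (2 * n + 1) / d)| := by
        rw [sum_sub_distrib, sum_const, nsmul_eq_mul, hcard]
    _ ≤ ∑ b ∈ Icc (-(n : ℤ)) n,
          |(#{a ∈ Icc (-(n : ℤ)) n | (a, b) ∈ stdPattern d e} : ℝ) - (2 * n + 1) / d| :=
        abs_sum_le_sum_abs _ _
    _ ≤ ∑ _b ∈ Icc (-(n : ℤ)) n, (1 : ℝ) :=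
        sum_le_sum fun b _ => abs_card_filter_mem_stdPattern_sub_le hd e n b
    _ = 2 * n + 1 := by rw [sum_const, nsmul_one, hcard]

theorem abs_gridCount_stdPattern_div_sub_le {d : ℤ} (hd : 0 < d) (e : ℤ) (n : ℕ) :
    |(gridCount (stdPattern d e) n : ℝ) / (2 * n + 1) ^ 2 - 1 / d| ≤ (1 : ℝ) / (n + 1) := by
  set m : ℝ := 2 * n + 1
  have hm : 0 < m := by positivity
  have hd' : (0 : ℝ) < d := by exact_mod_cast hd
  calc _ = |((gridCount (stdPattern d e) n : ℝ) - m * (m / d)) / m ^ 2| := by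
        congr 1
        field_simp
    _ = |(gridCount (stdPattern d e) n : ℝ) - m * (m / d)| / m ^ 2 := by
        rw [abs_div, abs_of_pos (pow_pos hm 2)]
    _ ≤ m / m ^ 2 := by gcongr; exact abs_gridCount_stdPattern_sub_le hd e n
    _ = 1 / m := by field_simp
    _ ≤ 1 / (n + 1) := by gcongr; linarith

theorem tendsto_gridCount_stdPattern {d : ℤ} (hd : 0 < d) (e : ℤ) :
    Tendsto (fun n : ℕ => (gridCount (stdPattern d e) n : ℝ) / (2 * n + 1) ^ 2) atTop
      (𝓝 (1 / (d : ℝ))) := by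
  rw [tendsto_iff_norm_sub_tendsto_zero]
  exact squeeze_zero (fun _ => norm_nonneg _) (abs_gridCount_stdPattern_div_sub_le hd e)
    tendsto_one_div_add_atTop_nhds_zero_nat

theorem stmt17 :
    IsBroadcast 5 5 (stdPattern 14 4) ∧
    (∃ S : Set (ℤ × ℤ), IsBroadcast 5 5 S ∧
      Filter.Tendsto (fun n : ℕ => (gridCount S n : ℝ) / (2 * n + 1) ^ 2)
        Filter.atTop (nhds (1 / 14))) ∧
    (1 : ℝ) / 14 < 1 / 13 := by
  refine ⟨isBroadcast_stdPattern_14_4, ⟨_, isBroadcast_stdPattern_14_4, ?_⟩, by norm_num⟩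
  simpa using tendsto_gridCount_stdPattern (d := 14) (by norm_num) 4
end
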